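/- arXiv:1607.07362 — 5 statements merged into one kernel-verified Lean document; each statement's English description precedes it below -/
import Mathlib

section
/- Let x̄ ≥ 0, M ≥ x̄, let x ∈ ℝ with 0 ≤ x ≤ x̄, let r, q ∈ {0, 1} with q ≤ r, and let y ∈ ℝ. Then the system of linear (big-M) constraints { 0 ≤ y, y ≤ x, y ≤ ((r + q)/2)·M, |y − x/2| ≤ (1 − r + q)·M, x − y ≤ (1 − q)·M } holds if and only if y = ((r + q)/2)·x. In particular, for sufficiently large M the big-M constraints exactly linearize the bilinear product y = u·x for u = (r + q)/2 ∈ {0, 1/2, 1}. -/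
/-- Big-M linearization of the bilinear product `y = ((r+q)/2) * x`. -/
theorem stmt2 (xbar M x r q y : ℝ)
    (hxbar : 0 ≤ xbar) (hM : xbar ≤ M)
    (hx0 : 0 ≤ x) (hx1 : x ≤ xbar)
    (hr : r = 0 ∨ r = 1) (hq : q = 0 ∨ q = 1) (hqr : q ≤ r) :
    (0 ≤ y ∧ y ≤ x ∧ y ≤ ((r + q) / 2) * M ∧
      |y - x / 2| ≤ (1 - r + q) * M ∧ x - y ≤ (1 - q) * M)
    ↔ y = ((r + q) / 2) * x := by
  have hxM : x ≤ M := le_trans hx1 hM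
  have hM0 : 0 ≤ M := le_trans hxbar hM
  rcases hr with hr | hr <;> rcases hq with hq | hq <;> subst hr <;> subst hq <;>
    simp only [abs_le] <;> constructor <;> intro h <;>
    first
      | (obtain ⟨h1, h2, h3, ⟨h4, h5⟩, h6⟩ := h; linarith)
      | (subst h; refine ⟨by linarith, by linarith, by linarith, ⟨by linarith, by linarith⟩, by linarith⟩)
      | linarith
end

section
/- Let r, q : ℕ → {0, 1} be binary sequences satisfying q_t ≤ r_t for all t, and satisfying the dynamic constraints: for every t ≥ 1, if r_t = 1 and q_t = 0 then r_{t+1} = 1 − r_{t−1} and q_{t+1} = 1 − q_{t−1}. Then there is no time t ≥ 1 with (r_{t−1}, q_{t−1}) = (r_t, q_t) = (1, 0); equivalently, the state u_t = (r_t + q_t)/2 cannot equal 1/2 at two consecutive time steps. -/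
/-- Under the dynamic constraints, the intermediate state `(r, q) = (1, 0)`
(i.e. `u = 1/2`) cannot occur at two consecutive time steps. -/
theorem stmt5 (r q : ℕ → ℝ)
    (hr : ∀ t, r t = 0 ∨ r t = 1) (hq : ∀ t, q t = 0 ∨ q t = 1)
    (hqr : ∀ t, q t ≤ r t)
    (hdyn : ∀ t, 1 ≤ t → r t = 1 → q t = 0 →
      r (t + 1) = 1 - r (t - 1) ∧ q (t + 1) = 1 - q (t - 1)) :
    ¬ ∃ t, 1 ≤ t ∧ r (t - 1) = 1 ∧ q (t - 1) = 0 ∧ r t = 1 ∧ q t = 0 := by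
  rintro ⟨t, ht, hr1, hq1, hr2, hq2⟩
  obtain ⟨h1, h2⟩ := hdyn t ht hr2 hq2
  have := hqr (t + 1)
  rw [h1, h2, hr1, hq1] at this
  linarith
end

section
/- Let r, q : ℕ → {0, 1} be binary sequences satisfying q_t ≤ r_t for all t, and satisfying the dynamic constraints: for every t ≥ 1, if r_t = 1 and q_t = 0 then r_{t+1} = 1 − r_{t−1} and q_{t+1} = 1 − q_{t−1}. Define u_t = (r_t + q_t)/2. If u_t = 1/2 for some t ≥ 1, then u_{t−1} ∈ {0, 1}, u_{t+1} ∈ {0, 1}, and u_{t+1} = 1 − u_{t−1}; that is, at the half-on state the unit continues its transition, completing a start-up if it was off and a shut-down if it was on, with no switching during the dynamics. -/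
/-- At the half-on state the unit continues its transition: if `u t = 1/2`
then `u (t-1), u (t+1) ∈ {0, 1}` and `u (t+1) = 1 - u (t-1)`. -/
theorem stmt6 (r q u : ℕ → ℝ)
    (hr : ∀ t, r t = 0 ∨ r t = 1) (hq : ∀ t, q t = 0 ∨ q t = 1)
    (hqr : ∀ t, q t ≤ r t)
    (hdyn : ∀ t, 1 ≤ t → r t = 1 → q t = 0 →
      r (t + 1) = 1 - r (t - 1) ∧ q (t + 1) = 1 - q (t - 1))
    (hu : ∀ t, u t = (r t + q t) / 2)
    (t : ℕ) (ht : 1 ≤ t) (hhalf : u t = 1/2) :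
    (u (t - 1) = 0 ∨ u (t - 1) = 1) ∧ (u (t + 1) = 0 ∨ u (t + 1) = 1) ∧
      u (t + 1) = 1 - u (t - 1) := by
  have hut := hu t
  rw [hhalf] at hut
  have hrt : r t = 1 ∧ q t = 0 := by
    rcases hr t with h | h <;> rcases hq t with h' | h'
    · exfalso; rw [h, h'] at hut; norm_num at hut
    · exact absurd (hqr t) (by rw [h, h']; norm_num)
    · exact ⟨h, h'⟩
    · exfalso; rw [h, h'] at hut; norm_num at hut
  obtain ⟨h1, h2⟩ := hdyn t ht hrt.1 hrt.2
  have heq : r (t - 1) = q (t - 1) := by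
    rcases hr (t - 1) with h | h <;> rcases hq (t - 1) with h' | h'
    · rw [h, h']
    · exact absurd (hqr (t - 1)) (by rw [h, h']; norm_num)
    · exfalso
      have := hqr (t + 1)
      rw [h1, h2, h, h'] at this
      norm_num at this
    · rw [h, h']
  have hu1 := hu (t - 1)
  have hu2 := hu (t + 1)
  rw [heq] at hu1
  rw [h1, h2, heq] at hu2
  rcases hq (t - 1) with h | h <;>
    exact ⟨by rw [hu1, h]; norm_num, by rw [hu2, h]; norm_num,
      by rw [hu1, hu2]; ring⟩
end

section
/- Let r : {0, 1, …, T} → {0, 1} be a binary on/off sequence, let v_t = max(r_t − r_{t−1}, 0) be its start-up indicator, and let m ≥ 1 be an integer. Then the family of linear constraints ( Σ_{h = max(1, t−m+1)}^{t} v_h ≤ r_t for every t ∈ {1, …, T} ) holds if and only if r satisfies the minimum up-time property with parameter m: whenever v_t = 1, then r_h = 1 for every h with t ≤ h ≤ min(t + m − 1, T). -/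
/-- The linear constraints `∑_{h = max(1, t-m+1)}^{t} v h ≤ r t` (for all
`t ∈ {1,…,T}`) hold iff `r` satisfies the minimum up-time property with
parameter `m`. -/
theorem stmt8 (T m : ℕ) (hm : 1 ≤ m) (r v : ℕ → ℝ)
    (hr : ∀ t, t ≤ T → r t = 0 ∨ r t = 1)
    (hv : ∀ t, 1 ≤ t → t ≤ T → v t = max (r t - r (t - 1)) 0) :
    (∀ t, 1 ≤ t → t ≤ T → ∑ h ∈ Finset.Icc (max 1 (t + 1 - m)) t, v h ≤ r t)
    ↔ (∀ t, 1 ≤ t → t ≤ T → v t = 1 →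
        ∀ h, t ≤ h → h ≤ min (t + m - 1) T → r h = 1) := by
  have hv01 : ∀ t, 1 ≤ t → t ≤ T → v t = 0 ∨ v t = 1 := by
    intro t h1 hT
    rw [hv t h1 hT]
    rcases hr t hT with h | h <;>
      rcases hr (t - 1) (le_trans (Nat.sub_le t 1) hT) with h' | h' <;>
      rw [h, h'] <;> norm_num
  have hv1 : ∀ t, 1 ≤ t → t ≤ T → v t = 1 → r t = 1 ∧ r (t - 1) = 0 := by
    intro t h1 hT hvt
    rw [hv t h1 hT] at hvt
    rcases hr t hT with h | h <;>
      rcases hr (t - 1) (le_trans (Nat.sub_le t 1) hT) with h' | h' <;>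
      rw [h, h'] at hvt <;> norm_num at hvt <;> exact ⟨h, h'⟩
  constructor
  · intro hc t h1 hT hvt h hth hhm
    have hh1 : 1 ≤ h := le_trans h1 hth
    have hhT : h ≤ T := le_trans hhm (min_le_right _ _)
    have hhm' : h ≤ t + m - 1 := le_trans hhm (min_le_left _ _)
    have hsum := hc h hh1 hhT
    have htmem : t ∈ Finset.Icc (max 1 (h + 1 - m)) h := by
      simp only [Finset.mem_Icc]
      exact ⟨max_le h1 (by omega), hth⟩
    have hle : (1 : ℝ) ≤ ∑ j ∈ Finset.Icc (max 1 (h + 1 - m)) h, v j := by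
      have := Finset.single_le_sum (f := v) (fun j hj => ?_) htmem
      · rw [hvt] at this; exact this
      · simp only [Finset.mem_Icc] at hj
        rw [hv j (le_trans (le_max_left 1 _) hj.1) (le_trans hj.2 hhT)]
        exact le_max_right _ _
    rcases hr h hhT with h0 | h0
    · linarith
    · exact h0
  · intro hp t h1 hT
    set a := max 1 (t + 1 - m) with ha
    have key : ∀ j, a ≤ j → j ≤ t → v j = 1 → ∀ k, j ≤ k → k ≤ t → r k = 1 := by
      intro j hja hjt hvj k hjk hkt
      have hj1 : 1 ≤ j := le_trans (le_max_left 1 _) hja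
      have hjm : t + 1 - m ≤ j := le_trans (le_max_right 1 _) hja
      refine hp j hj1 (le_trans hjt hT) hvj k hjk ?_
      exact le_min (by omega) (le_trans hkt hT)
    by_cases hex : ∃ j ∈ Finset.Icc a t, v j = 1
    · obtain ⟨j0, hj0, hvj0⟩ := hex
      simp only [Finset.mem_Icc] at hj0
      have hj01 : 1 ≤ j0 := le_trans (le_max_left 1 _) hj0.1
      have hrt : r t = 1 := key j0 hj0.1 hj0.2 hvj0 t hj0.2 le_rfl
      have hsum : ∑ h ∈ Finset.Icc a t, v h = v j0 := by
        apply Finset.sum_eq_single_of_mem _ (Finset.mem_Icc.mpr hj0)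
        intro j hj hne
        simp only [Finset.mem_Icc] at hj
        have hj1 : 1 ≤ j := le_trans (le_max_left 1 _) hj.1
        rcases hv01 j hj1 (le_trans hj.2 hT) with h0 | h0
        · exact h0
        · exfalso
          rcases lt_or_gt_of_ne hne with hlt | hgt
          · have hr1 := key j hj.1 hj.2 h0 (j0 - 1) (by omega) (by omega)
            have h2 := hv1 j0 hj01 (le_trans hj0.2 hT) hvj0
            rw [h2.2] at hr1; norm_num at hr1
          · have hr1 := key j0 hj0.1 hj0.2 hvj0 (j - 1) (by omega) (by omega)
            have h2 := hv1 j hj1 (le_trans hj.2 hT) h0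
            rw [h2.2] at hr1; norm_num at hr1
      rw [hsum, hvj0, hrt]
    · push_neg at hex
      have hsum : ∑ h ∈ Finset.Icc a t, v h = 0 := by
        apply Finset.sum_eq_zero
        intro j hj
        have hj' := Finset.mem_Icc.mp hj
        rcases hv01 j (le_trans (le_max_left 1 _) hj'.1) (le_trans hj'.2 hT) with h0 | h0
        · exact h0
        · exact absurd h0 (hex j hj)
      rw [hsum]
      rcases hr t hT with h0 | h0 <;> rw [h0] <;> norm_num
end

section
/- Let r : {0, 1, …, T} → {0, 1} be a binary on/off sequence, let w_t = max(r_{t−1} − r_t, 0) be its shut-down indicator, and let m ≥ 1 be an integer. Then the family of linear constraints ( Σ_{h = max(1, t−m+1)}^{t} w_h ≤ 1 − r_t for every t ∈ {1, …, T} ) holds if and only if r satisfies the minimum down-time property with parameter m: whenever w_t = 1, then r_h = 0 for every h with t ≤ h ≤ min(t + m − 1, T). -/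
/-- The linear constraints `∑_{h = max(1, t-m+1)}^{t} w h ≤ 1 - r t` (for all
`t ∈ {1,…,T}`) hold iff `r` satisfies the minimum down-time property with
parameter `m`. -/
theorem stmt9 (T m : ℕ) (hm : 1 ≤ m) (r w : ℕ → ℝ)
    (hr : ∀ t, t ≤ T → r t = 0 ∨ r t = 1)
    (hw : ∀ t, 1 ≤ t → t ≤ T → w t = max (r (t - 1) - r t) 0) :
    (∀ t, 1 ≤ t → t ≤ T → ∑ h ∈ Finset.Icc (max 1 (t + 1 - m)) t, w h ≤ 1 - r t)
    ↔ (∀ t, 1 ≤ t → t ≤ T → w t = 1 →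
        ∀ h, t ≤ h → h ≤ min (t + m - 1) T → r h = 0) := by
  have hw01 : ∀ h, 1 ≤ h → h ≤ T →
      w h = 0 ∨ (w h = 1 ∧ r (h - 1) = 1 ∧ r h = 0) := by
    intro h hh1 hhT
    rcases hr (h - 1) (by omega) with h0 | h0 <;> rcases hr h hhT with h1' | h1' <;>
      rw [hw h hh1 hhT, h0, h1'] <;> norm_num
  have hwnn : ∀ h, 1 ≤ h → h ≤ T → 0 ≤ w h := by
    intro h hh1 hhT; rw [hw h hh1 hhT]; exact le_max_right _ _
  constructor
  · intro hc t ht1 htT hwt h hth hhm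
    have hhT : h ≤ T := le_trans hhm (min_le_right _ _)
    have hhtm : h ≤ t + m - 1 := le_trans hhm (min_le_left _ _)
    have hh1 : 1 ≤ h := le_trans ht1 hth
    have hch := hc h hh1 hhT
    have hmem : t ∈ Finset.Icc (max 1 (h + 1 - m)) h := by
      simp only [Finset.mem_Icc]
      exact ⟨max_le ht1 (by omega), hth⟩
    have hsum : w t ≤ ∑ k ∈ Finset.Icc (max 1 (h + 1 - m)) h, w k := by
      apply Finset.single_le_sum (f := w) _ hmem
      intro k hk
      simp only [Finset.mem_Icc] at hk
      exact hwnn k (le_trans (le_max_left _ _) hk.1) (le_trans hk.2 hhT)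
    rcases hr h hhT with h0 | h0
    · exact h0
    · exfalso; rw [hwt] at hsum; rw [h0] at hch; linarith
  · intro hp t ht1 htT
    by_cases hex : ∃ h ∈ Finset.Icc (max 1 (t + 1 - m)) t, w h = 1
    · obtain ⟨h0, hh0, hw0⟩ := hex
      simp only [Finset.mem_Icc] at hh0
      have hh01 : 1 ≤ h0 := le_trans (le_max_left _ _) hh0.1
      have hh0m : t + 1 - m ≤ h0 := le_trans (le_max_right _ _) hh0.1
      have hh0T : h0 ≤ T := le_trans hh0.2 htT
      have hrt : r t = 0 :=
        hp h0 hh01 hh0T hw0 t hh0.2 (le_min (by omega) htT)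
      have honly : ∀ k ∈ Finset.Icc (max 1 (t + 1 - m)) t, k ≠ h0 → w k = 0 := by
        intro k hk hkne
        simp only [Finset.mem_Icc] at hk
        have hk1 : 1 ≤ k := le_trans (le_max_left _ _) hk.1
        have hkm : t + 1 - m ≤ k := le_trans (le_max_right _ _) hk.1
        have hkT : k ≤ T := le_trans hk.2 htT
        rcases hw01 k hk1 hkT with hz | ⟨hwk, hrk1, hrk0⟩
        · exact hz
        · exfalso
          rcases lt_trichotomy k h0 with hlt | heq | hgt
          · rcases hw01 h0 hh01 hh0T with hz | ⟨_, hr1, _⟩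
            · rw [hw0] at hz; norm_num at hz
            · have h00 := hp k hk1 hkT hwk (h0 - 1) (by omega)
                (le_min (by omega) (by omega))
              rw [h00] at hr1; norm_num at hr1
          · exact hkne heq
          · have h00 := hp h0 hh01 hh0T hw0 (k - 1) (by omega)
              (le_min (by omega) (by omega))
            rw [h00] at hrk1; norm_num at hrk1
      have hsum : ∑ k ∈ Finset.Icc (max 1 (t + 1 - m)) t, w k = 1 := by
        rw [Finset.sum_eq_single h0 honly
          (fun hno => absurd (Finset.mem_Icc.mpr hh0) hno)]
        exact hw0
      rw [hsum, hrt]; norm_num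
    · push_neg at hex
      have hsum : ∑ k ∈ Finset.Icc (max 1 (t + 1 - m)) t, w k = 0 := by
        apply Finset.sum_eq_zero
        intro k hk
        simp only [Finset.mem_Icc] at hk
        rcases hw01 k (le_trans (le_max_left _ _) hk.1) (le_trans hk.2 htT) with hz | ⟨h1, _⟩
        · exact hz
        · exact absurd h1 (hex k (Finset.mem_Icc.mpr hk))
      rw [hsum]
      rcases hr t htT with h | h <;> rw [h] <;> norm_num
end
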